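/- arXiv:2605.19531 — 4 statements merged into one kernel-verified Lean document; each statement's English description precedes it below -/
import Mathlib

section
/- For schedules s and t, s ~ t if and only if t can be obtained from s by a finite sequence of transpositions of adjacent non-conflicting operations; that is, ~ coincides with the smallest equivalence relation on O* that relates x·a·b·y and x·b·a·y for all schedules x, y and all operations a, b with ¬(a ≍ b). -/
open Classical

universe u v w

/-- Operations `a` and `b` commute in state `q`. -/
def CommuteIn {Q : Type u} {O : Type v} {R : Type w}
    (σ : O → Q → R × Q) (a b : O) (q : Q) : Prop :=
  ∃ (ra rb : R) (q1 q2 q' : Q),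
    σ a q = (ra, q1) ∧ σ b q1 = (rb, q') ∧ σ b q = (rb, q2) ∧ σ a q2 = (ra, q')

/-- Operations `a` and `b` conflict: they fail to commute in some state. -/
def Conflict {Q : Type u} {O : Type v} {R : Type w}
    (σ : O → Q → R × Q) (a b : O) : Prop :=
  ∃ q : Q, ¬ CommuteIn σ a b q

/-- Position in `s` of the `i`-th (0-indexed) occurrence of `o`, if it exists. -/
noncomputable def occIdx {O : Type v} (s : List O) (o : O) (i : ℕ) : Option ℕ :=
  ((List.range s.length).filter (fun k => decide (s[k]? = some o)))[i]?

/-- The `i`-th occurrence of `a` precedes the `j`-th occurrence of `b` in `s`. -/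
def Precedes {O : Type v} (s : List O) (a : O) (i : ℕ) (b : O) (j : ℕ) : Prop :=
  ∃ p q : ℕ, occIdx s a i = some p ∧ occIdx s b j = some q ∧ p < q

/-- Schedule equivalence: same multiset of operations, and the relative order of
any two occurrences of conflicting operations is the same. -/
def ScheduleEquiv {Q : Type u} {O : Type v} {R : Type w}
    (σ : O → Q → R × Q) (s s' : List O) : Prop :=
  (↑s : Multiset O) = (↑s' : Multiset O) ∧
  ∀ (a b : O) (i j : ℕ), Conflict σ a b →
    (Precedes s a i b j ↔ Precedes s' a i b j)

/-- `~` is an equivalence relation (proved here to form the quotient). -/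
def scheduleSetoid {Q : Type u} {O : Type v} {R : Type w}
    (σ : O → Q → R × Q) : Setoid (List O) :=
  ⟨ScheduleEquiv σ,
    ⟨fun _ => ⟨rfl, fun _ _ _ _ _ => Iff.rfl⟩,
     fun h => ⟨h.1.symm, fun a b i j hc => (h.2 a b i j hc).symm⟩,
     fun h h' => ⟨h.1.trans h'.1, fun a b i j hc => (h.2 a b i j hc).trans (h'.2 a b i j hc)⟩⟩⟩

/-- Traces: equivalence classes of schedules. -/
def Trace {Q : Type u} {O : Type v} {R : Type w} (σ : O → Q → R × Q) :=
  Quotient (scheduleSetoid σ)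

/-- Prefix order on traces. -/
def TraceLe {Q : Type u} {O : Type v} {R : Type w}
    (σ : O → Q → R × Q) (x y : Trace σ) : Prop :=
  ∃ s u : List O, x = Quotient.mk (scheduleSetoid σ) s ∧
    y = Quotient.mk (scheduleSetoid σ) (s ++ u)

/-- Executing a schedule from state `q`. -/
def execTrace {Q : Type u} {O : Type v} {R : Type w}
    (σ : O → Q → R × Q) : List O → Q → List (R × Q)
  | [], _ => []
  | o :: s, q => (σ o q) :: execTrace σ s (σ o q).2

/-- Return value of the `i`-th (0-indexed) occurrence of `o` in `s`,
executed from the initial state `q0`. -/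
noncomputable def retStar {Q : Type u} {O : Type v} {R : Type w}
    (σ : O → Q → R × Q) (q0 : Q) (o : O) (i : ℕ) (s : List O) : Option R :=
  (occIdx s o i).bind fun k => ((execTrace σ s q0)[k]?).map Prod.fst
/-- One step: transposition of two adjacent non-conflicting operations. -/
def SwapAdjacent {Q : Type u} {O : Type v} {R : Type w}
    (σ : O → Q → R × Q) (s t : List O) : Prop :=
  ∃ (x y : List O) (a b : O), ¬ Conflict σ a b ∧
    s = x ++ a :: b :: y ∧ t = x ++ b :: a :: y



theorem occIdx_nil {O : Type v} (o : O) (i : ℕ) : occIdx ([] : List O) o i = none := by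
  simp [occIdx]

theorem occIdx_cons {O : Type v} (a : O) (s : List O) (o : O) (i : ℕ) :
    occIdx (a :: s) o i =
      if a = o then (if i = 0 then some 0 else (occIdx s o (i-1)).map Nat.succ)
      else (occIdx s o i).map Nat.succ := by
  unfold occIdx
  rw [List.length_cons, List.range_succ_eq_map, List.filter_cons]
  have hmap : List.filter (fun k => decide ((a::s)[k]? = some o)) (List.map Nat.succ (List.range s.length))
      = List.map Nat.succ (List.filter (fun k => decide (s[k]? = some o)) (List.range s.length)) := by
    rw [List.filter_map]
    congr 1
  rw [hmap]
  by_cases h : a = o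
  · simp only [List.getElem?_cons_zero, h, decide_eq_true_eq, if_pos rfl]
    rw [if_pos (by simp)]
    cases i with
    | zero => simp
    | succ n => simp [List.getElem?_map]
  · rw [if_neg h]
    rw [if_neg (by simp [h])]
    simp [List.getElem?_map]

theorem occIdx_cons_self_zero {O : Type v} (a : O) (s : List O) :
    occIdx (a :: s) a 0 = some 0 := by simp [occIdx_cons]

theorem occIdx_cons_self_succ {O : Type v} (a : O) (s : List O) (i : ℕ) :
    occIdx (a :: s) a (i+1) = (occIdx s a i).map Nat.succ := by simp [occIdx_cons]

theorem occIdx_cons_ne {O : Type v} {a o : O} (h : a ≠ o) (s : List O) (i : ℕ) :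
    occIdx (a :: s) o i = (occIdx s o i).map Nat.succ := by simp [occIdx_cons, h]

theorem occIdx_isSome_iff {O : Type v} (s : List O) (o : O) (i : ℕ) :
    (occIdx s o i).isSome ↔ i < s.count o := by
  induction s generalizing i with
  | nil => simp [occIdx_nil]
  | cons a s ih =>
    by_cases h : a = o
    · subst h
      cases i with
      | zero => simp [occIdx_cons_self_zero, List.count_cons_self]
      | succ n =>
        rw [occIdx_cons_self_succ]
        rw [Option.isSome_map]
        rw [ih, List.count_cons_self]
        omega
    · rw [occIdx_cons_ne h]
      rw [Option.isSome_map, ih, List.count_cons_of_ne h]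

theorem occIdx_eq_some_iff {O : Type v} (s : List O) (o : O) (i p : ℕ) :
    occIdx s o i = some p ↔ (s[p]? = some o ∧ (s.take p).count o = i) := by
  induction s generalizing i p with
  | nil => simp [occIdx_nil]
  | cons a s ih =>
    by_cases h : a = o
    · subst h
      cases i with
      | zero =>
        rw [occIdx_cons_self_zero]
        constructor
        · intro hp
          have : p = 0 := by injection hp; omega
          subst this; simp
        · rintro ⟨h1, h2⟩
          cases p with
          | zero => rfl
          | succ q =>
            exfalso
            rw [List.take_succ_cons, List.count_cons_self] at h2
            omega
      | succ n =>
        rw [occIdx_cons_self_succ]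
        cases p with
        | zero => simp
        | succ q =>
          simp only [Option.map_eq_some_iff, List.getElem?_cons_succ, List.take_succ_cons,
            List.count_cons_self]
          constructor
          · rintro ⟨p', hp', he⟩
            have hq : p' = q := by omega
            subst hq
            have := (ih n p').mp hp'
            exact ⟨this.1, by omega⟩
          · rintro ⟨h1, h2⟩
            exact ⟨q, (ih n q).mpr ⟨h1, by omega⟩, rfl⟩
    · rw [occIdx_cons_ne h]
      cases p with
      | zero =>
        constructor
        · rintro hm
          exfalso
          rcases Option.map_eq_some_iff.mp hm with ⟨p', _, hp'⟩
          omega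
        · rintro ⟨h1, h2⟩
          rw [List.getElem?_cons_zero] at h1
          exact absurd (Option.some.inj h1) h
      | succ q =>
        simp only [Option.map_eq_some_iff, List.getElem?_cons_succ, List.take_succ_cons,
          List.count_cons_of_ne h]
        constructor
        · rintro ⟨p', hp', he⟩
          have hq : p' = q := by omega
          subst hq
          exact (ih i p').mp hp'
        · rintro ⟨h1, h2⟩
          exact ⟨q, (ih i q).mpr ⟨h1, h2⟩, rfl⟩

theorem occIdx_cons_tail {O : Type v} {e o : O} {i : ℕ} (h : ¬(o = e ∧ i = 0)) (s : List O) :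
    occIdx (e :: s) o i = (occIdx s o (i - if o = e then 1 else 0)).map Nat.succ := by
  by_cases he : o = e
  · subst he
    cases i with
    | zero => exact absurd ⟨rfl, rfl⟩ h
    | succ n => rw [occIdx_cons_self_succ]; simp
  · rw [occIdx_cons_ne (fun e' => he e'.symm)]
    simp [he]





theorem notConflict_symm {Q : Type u} {O : Type v} {R : Type w}
    {σ : O → Q → R × Q} {a b : O} (h : ¬ Conflict σ a b) : ¬ Conflict σ b a := by
  intro ⟨q, hq⟩
  apply h
  refine ⟨q, fun ⟨ra, rb, q1, q2, q', h1, h2, h3, h4⟩ => hq ?_⟩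
  exact ⟨rb, ra, q2, q1, q', h3, h4, h1, h2⟩

theorem sequiv_count {Q : Type u} {O : Type v} {R : Type w}
    {σ : O → Q → R × Q} {s t : List O} (h : ScheduleEquiv σ s t) (o : O) :
    s.count o = t.count o :=
  (Multiset.coe_eq_coe.mp h.1).count_eq o

theorem not_precedes_head {O : Type v} (s : List O) (e c : O) (i : ℕ) :
    ¬ Precedes (e :: s) c i e 0 := by
  rintro ⟨p, q, hp, hq, hlt⟩
  rw [occIdx_cons_self_zero] at hq
  have : q = 0 := by injection hq; omega
  omega

theorem precedes_head_iff {O : Type v} {e d : O} {j : ℕ} (hd : ¬(d = e ∧ j = 0))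
    (s : List O) (c : O) :
    Precedes (e :: s) e 0 d j ↔ (j - if d = e then 1 else 0) < s.count d := by
  rw [← occIdx_isSome_iff]
  constructor
  · rintro ⟨p, q, hp, hq, hlt⟩
    rw [occIdx_cons_tail hd] at hq
    rcases Option.map_eq_some_iff.mp hq with ⟨q', hq', rfl⟩
    simp [hq']
  · intro hs
    rcases Option.isSome_iff_exists.mp hs with ⟨q', hq'⟩
    exact ⟨0, q' + 1, occIdx_cons_self_zero e s, by rw [occIdx_cons_tail hd, hq']; rfl, by omega⟩

theorem precedes_cons_shift {O : Type v} (e : O) (s : List O) (c : O) (i : ℕ) (d : O) (j : ℕ) :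
    Precedes (e :: s) c (i + if c = e then 1 else 0) d (j + if d = e then 1 else 0)
      ↔ Precedes s c i d j := by
  have hc : occIdx (e :: s) c (i + if c = e then 1 else 0) = (occIdx s c i).map Nat.succ := by
    rw [occIdx_cons_tail (by by_cases h : c = e <;> simp [h])]
    congr 1
    by_cases h : c = e <;> simp [h]
  have hd : occIdx (e :: s) d (j + if d = e then 1 else 0) = (occIdx s d j).map Nat.succ := by
    rw [occIdx_cons_tail (by by_cases h : d = e <;> simp [h])]
    congr 1
    by_cases h : d = e <;> simp [h]
  unfold Precedes
  rw [hc, hd]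
  constructor
  · rintro ⟨p, q, hp, hq, hlt⟩
    rcases Option.map_eq_some_iff.mp hp with ⟨p', hp', rfl⟩
    rcases Option.map_eq_some_iff.mp hq with ⟨q', hq', rfl⟩
    exact ⟨p', q', hp', hq', by omega⟩
  · rintro ⟨p, q, hp, hq, hlt⟩
    exact ⟨p + 1, q + 1, by rw [hp]; rfl, by rw [hq]; rfl, by omega⟩

theorem sequiv_cons {Q : Type u} {O : Type v} {R : Type w}
    {σ : O → Q → R × Q} {s t : List O} (h : ScheduleEquiv σ s t) (e : O) :
    ScheduleEquiv σ (e :: s) (e :: t) := by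
  constructor
  · have : (↑s : Multiset O) = ↑t := h.1
    simp [← Multiset.cons_coe, this]
  · intro c d i j hcd
    by_cases hd : d = e ∧ j = 0
    · obtain ⟨rfl, rfl⟩ := hd
      simp only [iff_iff_implies_and_implies]
      exact ⟨fun hP => absurd hP (not_precedes_head s d c i),
             fun hP => absurd hP (not_precedes_head t d c i)⟩
    by_cases hc : c = e ∧ i = 0
    · obtain ⟨rfl, rfl⟩ := hc
      rw [precedes_head_iff hd s d, precedes_head_iff hd t d, sequiv_count h d]
    · have hi : i = (i - if c = e then 1 else 0) + (if c = e then 1 else 0) := by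
        by_cases h' : c = e <;> simp [h'] at hc ⊢ <;> omega
      have hj : j = (j - if d = e then 1 else 0) + (if d = e then 1 else 0) := by
        by_cases h' : d = e <;> simp [h'] at hd ⊢ <;> omega
      rw [hi, hj, precedes_cons_shift, precedes_cons_shift]
      exact h.2 c d _ _ hcd

theorem sequiv_cons_cancel {Q : Type u} {O : Type v} {R : Type w}
    {σ : O → Q → R × Q} {s t : List O} {e : O} (h : ScheduleEquiv σ (e :: s) (e :: t)) :
    ScheduleEquiv σ s t := by
  constructor
  · have h1 : (↑(e :: s) : Multiset O) = ↑(e :: t) := h.1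
    rw [← Multiset.cons_coe, ← Multiset.cons_coe] at h1
    exact (Multiset.cons_inj_right e).mp h1
  · intro c d i j hcd
    rw [← precedes_cons_shift e s c i d j, ← precedes_cons_shift e t c i d j]
    exact h.2 c d _ _ hcd

theorem occIdx_cons2 {O : Type v} {a b o : O} {i : ℕ} (hab : a ≠ b)
    (h1 : ¬(o = a ∧ i = 0)) (h2 : ¬(o = b ∧ i = 0)) (y : List O) :
    occIdx (a :: b :: y) o i =
      ((occIdx y o ((i - if o = a then 1 else 0) - if o = b then 1 else 0)).map
        Nat.succ).map Nat.succ := by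
  rw [occIdx_cons_tail h1]
  rw [occIdx_cons_tail (show ¬(o = b ∧ (i - if o = a then 1 else 0) = 0) by
    rintro ⟨rfl, hz⟩
    have : ¬ o = a := fun e => hab (e.symm.trans rfl)
    simp [this] at hz
    exact h2 ⟨rfl, hz⟩)]

theorem sequiv_swap {Q : Type u} {O : Type v} {R : Type w}
    {σ : O → Q → R × Q} {a b : O} (hab : ¬ Conflict σ a b) (y : List O) :
    ScheduleEquiv σ (a :: b :: y) (b :: a :: y) := by
  by_cases heq : a = b
  · subst heq; exact ⟨rfl, fun _ _ _ _ _ => Iff.rfl⟩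
  have hba : ¬ Conflict σ b a := notConflict_symm hab
  constructor
  · exact Multiset.coe_eq_coe.mpr (List.Perm.swap b a y)
  intro c d i j hcd
  by_cases hd1 : d = a ∧ j = 0
  · obtain ⟨rfl, rfl⟩ := hd1
    constructor
    · intro hP; exact absurd hP (not_precedes_head _ _ _ _)
    · rintro ⟨p, q, hp, hq, hlt⟩
      exfalso
      have hq1 : occIdx (b :: d :: y) d 0 = some 1 := by
        rw [occIdx_cons_ne (fun e => heq e.symm), occIdx_cons_self_zero]; rfl
      rw [hq1] at hq
      have : q = 1 := by injection hq with h; omega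
      have hp0 : p = 0 := by omega
      subst hp0
      have := (occIdx_eq_some_iff (b :: d :: y) c i 0).mp hp
      have hcb : c = b := by
        have := this.1
        rw [List.getElem?_cons_zero] at this
        exact (Option.some.inj this).symm
      have hi0 : i = 0 := by
        have := this.2
        simpa using this.symm
      subst hcb
      exact hba hcd
  by_cases hd2 : d = b ∧ j = 0
  · obtain ⟨rfl, rfl⟩ := hd2
    constructor
    · rintro ⟨p, q, hp, hq, hlt⟩
      exfalso
      have hq1 : occIdx (a :: d :: y) d 0 = some 1 := by
        rw [occIdx_cons_ne heq, occIdx_cons_self_zero]; rfl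
      rw [hq1] at hq
      have : q = 1 := by injection hq with h; omega
      have hp0 : p = 0 := by omega
      subst hp0
      have := (occIdx_eq_some_iff (a :: d :: y) c i 0).mp hp
      have hca : c = a := by
        have := this.1
        rw [List.getElem?_cons_zero] at this
        exact (Option.some.inj this).symm
      have hi0 : i = 0 := by
        have := this.2
        simpa using this.symm
      subst hca
      exact hab hcd
    · intro hP; exact absurd hP (not_precedes_head _ _ _ _)
  -- occIdx values for d are ≥ 2 and equal in both lists
  have hdv : occIdx (a :: b :: y) d j = occIdx (b :: a :: y) d j ∧
      ∀ q, occIdx (a :: b :: y) d j = some q → 2 ≤ q := by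
    rw [occIdx_cons2 heq hd1 hd2 y, occIdx_cons2 (fun e => heq e.symm) hd2 hd1 y,
      Nat.sub_right_comm]
    refine ⟨rfl, ?_⟩
    intro q hq
    rcases Option.map_eq_some_iff.mp hq with ⟨q', hq', rfl⟩
    rcases Option.map_eq_some_iff.mp hq' with ⟨q'', hq'', rfl⟩
    omega
  by_cases hc1 : c = a ∧ i = 0
  · obtain ⟨rfl, rfl⟩ := hc1
    constructor
    · rintro ⟨p, q, hp, hq, hlt⟩
      refine ⟨1, q, ?_, hdv.1 ▸ hq, ?_⟩
      · rw [occIdx_cons_ne (fun e => heq e.symm), occIdx_cons_self_zero]; rfl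
      · exact lt_of_lt_of_le (by omega) (hdv.2 q hq)
    · rintro ⟨p, q, hp, hq, hlt⟩
      refine ⟨0, q, occIdx_cons_self_zero c _, hdv.1 ▸ hq, ?_⟩
      exact lt_of_lt_of_le (by omega) (hdv.2 q (hdv.1 ▸ hq))
  by_cases hc2 : c = b ∧ i = 0
  · obtain ⟨rfl, rfl⟩ := hc2
    constructor
    · rintro ⟨p, q, hp, hq, hlt⟩
      refine ⟨0, q, occIdx_cons_self_zero c _, hdv.1 ▸ hq, ?_⟩
      exact lt_of_lt_of_le (by omega) (hdv.2 q hq)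
    · rintro ⟨p, q, hp, hq, hlt⟩
      refine ⟨1, q, ?_, hdv.1 ▸ hq, ?_⟩
      · rw [occIdx_cons_ne heq, occIdx_cons_self_zero]; rfl
      · exact lt_of_lt_of_le (by omega) (hdv.2 q (hdv.1 ▸ hq))
  · have hcv : occIdx (a :: b :: y) c i = occIdx (b :: a :: y) c i := by
      rw [occIdx_cons2 heq hc1 hc2 y, occIdx_cons2 (fun e => heq e.symm) hc2 hc1 y,
        Nat.sub_right_comm]
    unfold Precedes
    rw [hcv, hdv.1]

theorem swapAdjacent_equiv {Q : Type u} {O : Type v} {R : Type w}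
    {σ : O → Q → R × Q} {s t : List O} (h : SwapAdjacent σ s t) :
    ScheduleEquiv σ s t := by
  obtain ⟨x, y, a, b, hab, rfl, rfl⟩ := h
  induction x with
  | nil => exact sequiv_swap hab y
  | cons e x ih => exact sequiv_cons ih e

theorem sequiv_trans {Q : Type u} {O : Type v} {R : Type w}
    {σ : O → Q → R × Q} {s t r : List O} (h : ScheduleEquiv σ s t)
    (h' : ScheduleEquiv σ t r) : ScheduleEquiv σ s r :=
  ⟨h.1.trans h'.1, fun a b i j hc => (h.2 a b i j hc).trans (h'.2 a b i j hc)⟩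

theorem sequiv_symm {Q : Type u} {O : Type v} {R : Type w}
    {σ : O → Q → R × Q} {s t : List O} (h : ScheduleEquiv σ s t) :
    ScheduleEquiv σ t s :=
  ⟨h.1.symm, fun a b i j hc => (h.2 a b i j hc).symm⟩

theorem eqvGen_equiv {Q : Type u} {O : Type v} {R : Type w}
    {σ : O → Q → R × Q} {s t : List O}
    (h : Relation.EqvGen (SwapAdjacent σ) s t) : ScheduleEquiv σ s t := by
  induction h with
  | rel _ _ h => exact swapAdjacent_equiv h
  | refl _ => exact ⟨rfl, fun _ _ _ _ _ => Iff.rfl⟩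
  | symm _ _ _ ih => exact sequiv_symm ih
  | trans _ _ _ _ _ ih1 ih2 => exact sequiv_trans ih1 ih2

theorem eqvGen_cons {Q : Type u} {O : Type v} {R : Type w}
    {σ : O → Q → R × Q} {s t : List O} (e : O)
    (h : Relation.EqvGen (SwapAdjacent σ) s t) :
    Relation.EqvGen (SwapAdjacent σ) (e :: s) (e :: t) := by
  induction h with
  | rel x y h =>
    obtain ⟨u, v, a, b, hab, rfl, rfl⟩ := h
    exact Relation.EqvGen.rel _ _ ⟨e :: u, v, a, b, hab, rfl, rfl⟩
  | refl x => exact Relation.EqvGen.refl _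
  | symm x y _ ih => exact Relation.EqvGen.symm _ _ ih
  | trans x y z _ _ ih1 ih2 => exact Relation.EqvGen.trans _ _ _ ih1 ih2

theorem bubble {Q : Type u} {O : Type v} {R : Type w}
    {σ : O → Q → R × Q} {a : O} (u : List O) (v : List O)
    (h : ∀ c ∈ u, ¬ Conflict σ c a) :
    Relation.EqvGen (SwapAdjacent σ) (u ++ a :: v) (a :: (u ++ v)) := by
  induction u with
  | nil => exact Relation.EqvGen.refl _
  | cons c u ih =>
    have h1 : Relation.EqvGen (SwapAdjacent σ) (c :: (u ++ a :: v)) (c :: a :: (u ++ v)) :=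
      eqvGen_cons c (ih fun x hx => h x (List.mem_cons_of_mem c hx))
    have h2 : Relation.EqvGen (SwapAdjacent σ) (c :: a :: (u ++ v)) (a :: c :: (u ++ v)) :=
      Relation.EqvGen.rel _ _ ⟨[], u ++ v, c, a, h c List.mem_cons_self, rfl, rfl⟩
    exact Relation.EqvGen.trans _ _ _ h1 h2

theorem exists_split_first {O : Type v} {a : O} {t : List O} (h : a ∈ t) :
    ∃ u v : List O, t = u ++ a :: v ∧ a ∉ u := by
  induction t with
  | nil => simp at h
  | cons e t ih =>
    by_cases he : e = a
    · exact ⟨[], t, by rw [he]; rfl, by simp⟩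
    · rcases ih (by rcases List.mem_cons.mp h with h' | h'; exact absurd h'.symm he; exact h') with
        ⟨u, v, rfl, hnu⟩
      exact ⟨e :: u, v, rfl, by simp only [List.mem_cons, not_or]; exact ⟨fun e' => he e'.symm, hnu⟩⟩

theorem equiv_to_eqvGen {Q : Type u} {O : Type v} {R : Type w}
    (σ : O → Q → R × Q) : ∀ (s t : List O), ScheduleEquiv σ s t →
    Relation.EqvGen (SwapAdjacent σ) s t := by
  intro s
  induction s with
  | nil =>
    intro t h
    have : t = [] := by
      have := h.1.symm
      rw [show ((↑([] : List O)) : Multiset O) = 0 from rfl] at this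
      exact (Multiset.coe_eq_zero t).mp this
    rw [this]
    exact Relation.EqvGen.refl _
  | cons a s ih =>
    intro t h
    have hmem : a ∈ t := (Multiset.coe_eq_coe.mp h.1).mem_iff.mp List.mem_cons_self
    obtain ⟨u, v, rfl, hnotmem⟩ := exists_split_first hmem
    have hnc : ∀ c ∈ u, ¬ Conflict σ c a := by
      intro c hc hconf
      obtain ⟨p, hplen, hcp⟩ := List.mem_iff_getElem.mp hc
      have hP : Precedes (u ++ a :: v) c ((u.take p).count c) a 0 := by
        refine ⟨p, u.length, ?_, ?_, hplen⟩
        · rw [occIdx_eq_some_iff]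
          constructor
          · rw [List.getElem?_append, if_pos hplen, List.getElem?_eq_getElem hplen, hcp]
          · rw [List.take_append_of_le_length (le_of_lt hplen)]
        · rw [occIdx_eq_some_iff]
          constructor
          · rw [List.getElem?_append_right (le_refl u.length)]
            simp
          · rw [List.take_left]
            exact List.count_eq_zero.mpr hnotmem
      have := (h.2 c a _ 0 hconf).mpr hP
      exact not_precedes_head s a c _ this
    have h1 : Relation.EqvGen (SwapAdjacent σ) (u ++ a :: v) (a :: (u ++ v)) := bubble u v hnc
    have h2 : ScheduleEquiv σ (a :: s) (a :: (u ++ v)) := sequiv_trans h (eqvGen_equiv h1)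
    have h3 : ScheduleEquiv σ s (u ++ v) := sequiv_cons_cancel h2
    exact Relation.EqvGen.trans _ _ _ (eqvGen_cons a (ih _ h3))
      (Relation.EqvGen.symm _ _ h1)


/-- `s ~ t` iff `t` is obtained from `s` by a finite sequence of
transpositions of adjacent non-conflicting operations, i.e. `~` coincides with
the smallest equivalence relation relating `x·a·b·y` and `x·b·a·y` whenever
`¬(a ≍ b)`. -/
theorem scheduleEquiv_iff_eqvGen_swapAdjacent
    {Q : Type u} {O : Type v} {R : Type w} (σ : O → Q → R × Q) :
    ∀ s t : List O,
      ScheduleEquiv σ s t ↔ Relation.EqvGen (SwapAdjacent σ) s t :=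
  fun s t => ⟨equiv_to_eqvGen σ s t, eqvGen_equiv⟩
end

section
/- If operations o and o' do not conflict (¬(o ≍ o')), then for all schedules x, x', every operation c, and every occurrence index i such that c has at least i occurrences in x·o·o'·x', the return value of the occurrence c^(i) is the same in the two schedules: ret*(c^(i), x·o·o'·x') = ret*(c^(i), x·o'·o·x'). -/
open Classical

universe u v w

section AuxSwap

variable {Q : Type u} {O : Type v} {R : Type w}

/-- State reached after executing a schedule. -/
def execState (σ : O → Q → R × Q) : List O → Q → Q
  | [], q => q
  | o :: s, q => execState σ s (σ o q).2

lemma execTrace_append (σ : O → Q → R × Q) (s t : List O) (q : Q) :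
    execTrace σ (s ++ t) q = execTrace σ s q ++ execTrace σ t (execState σ s q) := by
  induction s generalizing q with
  | nil => simp [execTrace, execState]
  | cons a s ih => simp [execTrace, execState, ih]

lemma length_execTrace (σ : O → Q → R × Q) (s : List O) (q : Q) :
    (execTrace σ s q).length = s.length := by
  induction s generalizing q with
  | nil => simp [execTrace]
  | cons a s ih => simp [execTrace, ih]

/-- List of positions of occurrences of `c` in `s`. -/
noncomputable def posList (s : List O) (c : O) : List ℕ :=
  (List.range s.length).filter (fun k => decide (s[k]? = some c))

lemma occIdx_eq_posList (s : List O) (c : O) (i : ℕ) :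
    occIdx s c i = (posList s c)[i]? := rfl

lemma mem_posList {s : List O} {c : O} {k : ℕ} (hk : k ∈ posList s c) :
    k < s.length ∧ s[k]? = some c := by
  unfold posList at hk
  rw [List.mem_filter, List.mem_range] at hk
  exact ⟨hk.1, of_decide_eq_true hk.2⟩

lemma posList_append (x y : List O) (c : O) :
    posList (x ++ y) c = posList x c ++ (posList y c).map (fun k => x.length + k) := by
  unfold posList
  rw [List.length_append, List.range_add, List.filter_append, List.filter_map]
  congr 1
  · apply List.filter_congr
    intro k hk
    rw [List.mem_range] at hk
    rw [decide_eq_decide]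
    rw [List.getElem?_append, if_pos hk]
  · congr 1
    apply List.filter_congr
    intro k hk
    rw [List.mem_range] at hk
    show decide ((x ++ y)[x.length + k]? = some c) = _
    rw [decide_eq_decide]
    rw [List.getElem?_append_right (by omega)]
    congr! 2
    omega

lemma posList_pair (a b c : O) :
    posList [a, b] c =
      (if a = c then [0] else []) ++ (if b = c then [1] else []) := by
  unfold posList
  show List.filter _ [0, 1] = _
  by_cases ha : a = c <;> by_cases hb : b = c <;>
    simp [List.filter, ha, hb]

end AuxSwap

/-- if `o` and `o'` do not conflict, then swapping them (adjacent)
does not change the return value of any operation occurrence. -/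
theorem retStar_swap_adjacent_nonconflicting
    {Q : Type u} {O : Type v} {R : Type w}
    (σ : O → Q → R × Q) (q0 : Q) (o o' : O) (h : ¬ Conflict σ o o') :
    ∀ (x x' : List O) (c : O) (i : ℕ),
      (occIdx (x ++ o :: o' :: x') c i).isSome →
      retStar σ q0 c i (x ++ o :: o' :: x') =
        retStar σ q0 c i (x ++ o' :: o :: x') := by
  intro x x' c i _
  by_cases hoo : o = o'
  · subst hoo; rfl
  rw [Conflict] at h; push_neg at h
  set n := x.length with hn
  set q : Q := execState σ x q0 with hq
  obtain ⟨ra, rb, q1, q2, q', h1, h2, h3, h4⟩ := h q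
  set f : ℕ → ℕ := fun k => if k = n then n + 1 else if k = n + 1 then n else k with hf
  -- execution decompositions
  have hx1 : execTrace σ (x ++ o :: o' :: x') q0
      = execTrace σ x q0 ++ (ra, q1) :: (rb, q') :: execTrace σ x' q' := by
    rw [execTrace_append, ← hq]
    simp [execTrace, h1, h2]
  have hx2 : execTrace σ (x ++ o' :: o :: x') q0
      = execTrace σ x q0 ++ (rb, q2) :: (ra, q') :: execTrace σ x' q' := by
    rw [execTrace_append, ← hq]
    simp [execTrace, h3, h4]
  -- position decompositions
  have hp1 : posList (x ++ o :: o' :: x') c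
      = posList x c ++ (posList [o, o'] c).map (fun k => n + k)
          ++ (posList x' c).map (fun k => n + (2 + k)) := by
    rw [show (o :: o' :: x' : List O) = [o, o'] ++ x' from rfl, posList_append,
      posList_append, ← hn]
    simp [List.map_map, List.append_assoc, Function.comp]
    intro a _
    omega
  have hp2 : posList (x ++ o' :: o :: x') c
      = posList x c ++ (posList [o', o] c).map (fun k => n + k)
          ++ (posList x' c).map (fun k => n + (2 + k)) := by
    rw [show (o' :: o :: x' : List O) = [o', o] ++ x' from rfl, posList_append,
      posList_append, ← hn]
    simp [List.map_map, List.append_assoc, Function.comp]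
    intro a _
    omega
  -- the swap map relates the two position lists
  have hmap : posList (x ++ o' :: o :: x') c
      = (posList (x ++ o :: o' :: x') c).map f := by
    rw [hp1, hp2, List.map_append, List.map_append]
    congr 1
    · congr 1
      · -- positions in x are fixed by f
        rw [show (posList x c).map f = (posList x c).map id from
          List.map_congr_left (by
            intro k hk
            have hk' := (mem_posList hk).1
            simp only [hf, id]
            rw [if_neg (by omega), if_neg (by omega)]), List.map_id]
      · -- middle positions are swapped
        rw [List.map_map]
        by_cases hco : o = c <;> by_cases hco' : o' = c
        · exact absurd (hco.trans hco'.symm) hoo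
        · simp only [posList_pair, if_pos hco, if_neg hco', if_pos, if_neg]
          simp [hf, Function.comp]
        · simp only [posList_pair, if_pos hco', if_neg hco]
          simp [hf, Function.comp]
        · simp [posList_pair, if_neg hco, if_neg hco']
    · -- positions in x' are fixed by f
      rw [List.map_map]
      apply List.map_congr_left
      intro k _
      simp only [Function.comp, hf]
      rw [if_neg (by omega), if_neg (by omega)]
  -- pointwise equality of responses under the swap map
  have hF : ((execTrace σ x q0).map Prod.fst).length = n := by
    rw [List.length_map, length_execTrace]
  have hresp : ∀ k,
      ((execTrace σ x q0).map Prod.fst ++ ra :: rb :: (execTrace σ x' q').map Prod.fst)[k]?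
        = ((execTrace σ x q0).map Prod.fst ++ rb :: ra :: (execTrace σ x' q').map Prod.fst)[f k]? := by
    intro k
    by_cases hk1 : k = n
    · subst hk1
      have : f n = n + 1 := by simp [hf]
      rw [this, List.getElem?_append_right (by omega), List.getElem?_append_right (by omega),
        hF]
      simp
    by_cases hk2 : k = n + 1
    · subst hk2
      have : f (n + 1) = n := by simp [hf]
      rw [this, List.getElem?_append_right (by omega), List.getElem?_append_right (by omega),
        hF]
      simp
    have hfk : f k = k := by simp only [hf]; rw [if_neg hk1, if_neg hk2]
    rw [hfk]
    by_cases hkn : k < n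
    · rw [List.getElem?_append, List.getElem?_append, hF, if_pos hkn, if_pos hkn]
    · obtain ⟨j, hj⟩ : ∃ j, k - n = j + 2 := ⟨k - n - 2, by omega⟩
      rw [List.getElem?_append_right (by omega), List.getElem?_append_right (by omega),
        hF, hj]
      simp
  -- put everything together
  show (occIdx (x ++ o :: o' :: x') c i).bind _ = (occIdx (x ++ o' :: o :: x') c i).bind _
  rw [occIdx_eq_posList, occIdx_eq_posList, hmap, List.getElem?_map]
  cases hk : (posList (x ++ o :: o' :: x') c)[i]? with
  | none => simp
  | some k =>
    simp only [Option.map_some, Option.bind_some, Option.bind_some]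
    rw [hx1, hx2]
    have e1 := (List.getElem?_map (f := Prod.fst)
      (l := execTrace σ x q0 ++ (ra, q1) :: (rb, q') :: execTrace σ x' q') (i := k))
    have e2 := (List.getElem?_map (f := Prod.fst)
      (l := execTrace σ x q0 ++ (rb, q2) :: (ra, q') :: execTrace σ x' q') (i := f k))
    rw [← e1, ← e2]
    simp only [List.map_append, List.map_cons]
    exact hresp k
end

section
/- If s ~ t for nonempty schedules s and t, then executing s and t from the initial state q0 yields the same final state: the state (second) component of the last entry of σ*(s, q0) equals the state component of the last entry of σ*(t, q0). -/
/-!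
Induct on `t = b :: t'`, writing `s = u ++ b :: v` with `b ∉ u`. Each `a ∈ u` has an
occurrence before the first `b` in `s` but not in `t`, so `a` and `b` do not conflict, and `b`
can be moved to the front of `s` without changing the final state. Erasing the first `b` from
two equivalent schedules keeps them equivalent: positions are shifted by an order embedding of
`ℕ` and only the occurrence ranks of `b` change, by one. So `u ++ v ~ t'` and the induction
hypothesis applies.
-/

open Classical

universe u v w

def Nat.succAbove (n k : ℕ) : ℕ := if k < n then k else k + 1

lemma Nat.strictMono_succAbove (n : ℕ) : StrictMono (Nat.succAbove n) := by
  intro k l hkl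
  unfold Nat.succAbove
  split_ifs <;> omega

lemma List.map_succAbove_findIdxs_append {α : Type*} (p : α → Bool) (u v : List α) :
    ((u ++ v).findIdxs p).map (Nat.succAbove u.length) =
      u.findIdxs p ++ v.findIdxs p (u.length + 1) := by
  rw [List.findIdxs_append, List.map_append, List.findIdxs_start (s := u.length + 1),
    List.findIdxs_start (s := 0 + u.length), List.map_map]
  congr 1
  · conv_rhs => rw [← List.map_id (u.findIdxs p)]
    refine List.map_congr_left fun k hk => ?_
    have := List.lt_add_of_mem_findIdxs k hk
    simp_all [Nat.succAbove]
  · refine List.map_congr_left fun k _ => ?_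
    simp only [Function.comp_apply, Nat.succAbove]
    split_ifs <;> omega

section Occurrences

variable {O : Type v}

lemma occIdx_eq_getElem?_findIdxs (s : List O) (o : O) (i : ℕ) :
    occIdx s o i = (s.findIdxs (· = o))[i]? := by
  suffices h : ∀ s : List O,
      (List.range s.length).filter (fun k => decide (s[k]? = some o)) = s.findIdxs (· = o) by
    rw [occIdx, h]
  intro s
  induction s with
  | nil => rfl
  | cons x s ih =>
    rw [List.length_cons, List.range_succ_eq_map, List.filter_cons, List.filter_map,
      List.findIdxs_cons, List.findIdxs_start, ← ih]
    simp [Function.comp_def]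

lemma occIdx_append_cons {u : List O} {b : O} (hb : b ∉ u) (v : List O) (o : O) (i : ℕ) :
    occIdx (u ++ b :: v) o (if o = b then i + 1 else i) =
      (occIdx (u ++ v) o i).map (Nat.succAbove u.length) := by
  rw [occIdx_eq_getElem?_findIdxs, occIdx_eq_getElem?_findIdxs, ← List.getElem?_map,
    List.map_succAbove_findIdxs_append, List.findIdxs_append, List.findIdxs_cons]
  by_cases ho : o = b
  · subst ho
    have hnil : u.findIdxs (· = o) = [] := List.findIdxs_eq_nil_iff.mpr (by grind)
    simp [hnil]
  · simp [ho, Ne.symm ho]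

lemma precedes_iff_of_occIdx_eq_map {s s' : List O} {f : ℕ → ℕ} (hf : StrictMono f)
    {a c : O} {i i' j j' : ℕ} (ha : occIdx s a i = (occIdx s' a i').map f)
    (hc : occIdx s c j = (occIdx s' c j').map f) :
    Precedes s a i c j ↔ Precedes s' a i' c j' := by
  simp only [Precedes, ha, hc, Option.map_eq_some_iff]
  constructor
  · rintro ⟨_, _, ⟨p, hp, rfl⟩, ⟨q, hq, rfl⟩, hlt⟩
    exact ⟨p, q, hp, hq, hf.lt_iff_lt.mp hlt⟩
  · rintro ⟨p, q, hp, hq, hlt⟩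
    exact ⟨f p, f q, ⟨p, hp, rfl⟩, ⟨q, hq, rfl⟩, hf hlt⟩

lemma precedes_erase_iff {s : List O} {b : O} (hb : b ∈ s) (a c : O) (i j : ℕ) :
    Precedes (s.erase b) a i c j ↔
      Precedes s a (if a = b then i + 1 else i) c (if c = b then j + 1 else j) := by
  obtain ⟨u, v, hbu, rfl, herase⟩ := List.exists_erase_eq hb
  rw [herase]
  exact (precedes_iff_of_occIdx_eq_map (Nat.strictMono_succAbove u.length)
    (occIdx_append_cons hbu v a i) (occIdx_append_cons hbu v c j)).symm

lemma not_precedes_cons_zero (b : O) (t : List O) (a : O) (i : ℕ) :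
    ¬Precedes (b :: t) a i b 0 := by
  have h0 : occIdx (b :: t) b 0 = some 0 := by
    rw [occIdx_eq_getElem?_findIdxs, List.findIdxs_cons]
    simp
  rintro ⟨p, q, -, hq, hpq⟩
  rw [h0, Option.some_inj] at hq
  omega

lemma exists_precedes_append_cons_zero {u : List O} {a b : O} (ha : a ∈ u) (hb : b ∉ u)
    (v : List O) : ∃ i, Precedes (u ++ b :: v) a i b 0 := by
  obtain ⟨p, hp, rfl⟩ := List.getElem_of_mem ha
  have hmem : p ∈ (u ++ b :: v).findIdxs (· = u[p]) :=
    List.mem_findIdxs_iff_exists_getElem_pos.mpr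
      ⟨by simp only [List.length_append, List.length_cons]; omega,
        by simp [List.getElem_append_left hp]⟩
  obtain ⟨i, hi⟩ := List.mem_iff_getElem?.mp hmem
  have hnil : u.findIdxs (· = b) = [] := List.findIdxs_eq_nil_iff.mpr (by grind)
  refine ⟨i, p, u.length, by rwa [occIdx_eq_getElem?_findIdxs], ?_, hp⟩
  rw [occIdx_eq_getElem?_findIdxs, List.findIdxs_append, hnil, List.findIdxs_cons]
  simp

end Occurrences

section Execution

variable {Q : Type u} {O : Type v} {R : Type w}

def finalState (σ : O → Q → R × Q) (s : List O) (q : Q) : Q :=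
  s.foldl (fun q o => (σ o q).2) q

variable {σ : O → Q → R × Q}

lemma execTrace_getLast?_map_snd (s : List O) (q : Q) :
    (execTrace σ s q).getLast?.map Prod.snd =
      if s = [] then none else some (finalState σ s q) := by
  induction s generalizing q with
  | nil => rfl
  | cons o s ih =>
    cases s with
    | nil => rfl
    | cons o' s =>
      simp only [execTrace] at ih ⊢
      rw [List.getLast?_cons_cons, ih]
      rfl

lemma snd_comm_of_not_conflict {a b : O} (h : ¬Conflict σ a b) (q : Q) :
    (σ b (σ a q).2).2 = (σ a (σ b q).2).2 := by
  obtain ⟨ra, rb, q₁, q₂, q', h₁, h₂, h₃, h₄⟩ := not_exists_not.mp h q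
  rw [h₁, h₃]
  simp only [h₂, h₄]

lemma finalState_append_cons {u : List O} {b : O}
    (hu : ∀ a ∈ u, ∀ q, (σ b (σ a q).2).2 = (σ a (σ b q).2).2) (v : List O) (q : Q) :
    finalState σ (u ++ b :: v) q = finalState σ (u ++ v) (σ b q).2 := by
  induction u generalizing q with
  | nil => rfl
  | cons x u ih =>
    simp only [List.forall_mem_cons] at hu
    simp only [finalState, List.cons_append, List.foldl_cons] at ih ⊢
    rw [ih hu.2, hu.1]

namespace ScheduleEquiv

variable {s t : List O}

lemma mem_iff (h : ScheduleEquiv σ s t) (b : O) : b ∈ s ↔ b ∈ t := by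
  rw [← Multiset.mem_coe, h.1, Multiset.mem_coe]

lemma eq_nil_iff (h : ScheduleEquiv σ s t) : s = [] ↔ t = [] := by
  rw [← Multiset.coe_eq_zero, h.1, Multiset.coe_eq_zero]

lemma erase (h : ScheduleEquiv σ s t) (b : O) : ScheduleEquiv σ (s.erase b) (t.erase b) := by
  refine ⟨by rw [← Multiset.coe_erase, ← Multiset.coe_erase, h.1], fun a c i j hac => ?_⟩
  by_cases hbs : b ∈ s
  · rw [precedes_erase_iff hbs, precedes_erase_iff ((h.mem_iff b).mp hbs)]
    exact h.2 a c _ _ hac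
  · rw [List.erase_of_not_mem hbs, List.erase_of_not_mem (mt (h.mem_iff b).mpr hbs)]
    exact h.2 a c i j hac

lemma not_conflict_of_mem_prefix {u v : List O} {a b : O}
    (h : ScheduleEquiv σ (u ++ b :: v) (b :: t)) (hb : b ∉ u) (ha : a ∈ u) :
    ¬Conflict σ a b := fun hab =>
  have ⟨i, hi⟩ := exists_precedes_append_cons_zero ha hb v
  not_precedes_cons_zero b t a i ((h.2 a b i 0 hab).mp hi)

lemma finalState_eq (h : ScheduleEquiv σ s t) (q : Q) : finalState σ s q = finalState σ t q := by
  induction t generalizing s q with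
  | nil => rw [h.eq_nil_iff.mpr rfl]
  | cons b t ih =>
    obtain ⟨u, v, hbu, rfl, herase⟩ := List.exists_erase_eq ((h.mem_iff b).mpr List.mem_cons_self)
    have htail : ScheduleEquiv σ (u ++ v) t := by
      simpa only [herase, List.erase_cons_head] using h.erase b
    rw [finalState_append_cons (fun a ha => snd_comm_of_not_conflict
      (h.not_conflict_of_mem_prefix hbu ha)), ih htail]
    rfl

end ScheduleEquiv

end Execution

theorem finalState_eq_of_scheduleEquiv_general
    {Q : Type u} {O : Type v} {R : Type w}
    (σ : O → Q → R × Q) (q0 : Q) (s t : List O)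
    (h : ScheduleEquiv σ s t) :
    ((execTrace σ s q0).getLast?).map Prod.snd =
      ((execTrace σ t q0).getLast?).map Prod.snd := by
  simp only [execTrace_getLast?_map_snd, h.finalState_eq, h.eq_nil_iff]

/-- equivalent nonempty schedules executed from the initial state
`q0` reach the same final state. -/
theorem finalState_eq_of_scheduleEquiv
    {Q : Type u} {O : Type v} {R : Type w}
    (σ : O → Q → R × Q) (q0 : Q) (s t : List O)
    (h : ScheduleEquiv σ s t) (hs : s ≠ []) (ht : t ≠ []) :
    ((execTrace σ s q0).getLast?).map Prod.snd =
      ((execTrace σ t q0).getLast?).map Prod.snd :=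
  finalState_eq_of_scheduleEquiv_general σ q0 s t h
end

section
/- Let t be a trace and let u_1, …, u_k be traces such that any two operations a, b (possibly equal, possibly occurring in different u_i's) that occur in some u_1, …, u_k satisfy ¬(a ≍ b). Then the set {t·u_1, …, t·u_k} is compatible; in fact t·u_1·u_2·…·u_k is a common extension of all t·u_i. -/
open Classical

universe u v w

/-- A set of traces is compatible if it has a common extension. -/
def Compatible {Q : Type u} {O : Type v} {R : Type w}
    (σ : O → Q → R × Q) (S : Set (Trace σ)) : Prop :=
  ∃ z : Trace σ, ∀ x ∈ S, TraceLe σ x z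


namespace TraceAux
variable {O : Type v}

noncomputable def positions (s : List O) (o : O) : List ℕ :=
  (List.range s.length).filter (fun k => decide (s[k]? = some o))

lemma occIdx_eq (s : List O) (o : O) (i : ℕ) : occIdx s o i = (positions s o)[i]? := rfl

lemma mem_of_getElem?_eq_some {α : Type*} {l : List α} {i : ℕ} {x : α}
    (h : l[i]? = some x) : x ∈ l := by
  obtain ⟨h1, h2⟩ := List.getElem?_eq_some_iff.1 h
  exact h2 ▸ List.getElem_mem h1

lemma mem_positions_lt {s : List O} {o : O} {p : ℕ} (hp : p ∈ positions s o) : p < s.length := by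
  have := List.mem_filter.1 hp
  exact List.mem_range.1 this.1

lemma positions_append (t w : List O) (o : O) :
    positions (t ++ w) o = positions t o ++ (positions w o).map (t.length + ·) := by
  unfold positions
  rw [List.length_append, List.range_add, List.filter_append, List.filter_map]
  congr 1
  · apply List.filter_congr
    intro k hk
    rw [List.mem_range] at hk
    rw [List.getElem?_append_left hk]
  · congr 1
    apply List.filter_congr
    intro k hk
    simp only [Function.comp_apply]
    rw [List.getElem?_append_right (Nat.le_add_right _ _), Nat.add_sub_cancel_left]

lemma positions_eq_nil {w : List O} {o : O} (h : o ∉ w) : positions w o = [] := by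
  apply List.filter_eq_nil_iff.2
  intro k hk
  simp only [decide_eq_true_iff]
  intro hw
  obtain ⟨hlt, he⟩ := List.getElem?_eq_some_iff.1 hw
  exact h (he ▸ List.getElem_mem hlt)

lemma length_positions (w : List O) (o : O) :
    (positions w o).length = w.countP (fun x => decide (x = o)) := by
  induction w with
  | nil => rfl
  | cons c w ih =>
    unfold positions
    rw [List.length_cons, List.range_succ_eq_map, List.filter_cons]
    have hmap : List.filter (fun k => decide ((c :: w)[k]? = some o))
        (List.map Nat.succ (List.range w.length)) = List.map Nat.succ (positions w o) := by
      rw [List.filter_map]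
      congr 1
    rw [List.countP_cons]
    by_cases hc : (c :: w)[0]? = some o
    · have hco : (c = o) := by simpa using hc
      rw [if_pos (decide_eq_true hc), List.length_cons, hmap, List.length_map, ih,
        if_pos (decide_eq_true hco)]
    · have hco : ¬ (c = o) := by simpa using hc
      rw [if_neg (by simpa using hc), hmap, List.length_map, ih,
        if_neg (by simpa using hco), Nat.add_zero]

lemma length_positions_eq {w w' : List O} (hperm : w.Perm w') (o : O) :
    (positions w o).length = (positions w' o).length := by
  rw [length_positions, length_positions, hperm.countP_eq]

lemma precedes_mono {Q : Type u} {R : Type w} (σ : O → Q → R × Q)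
    (t w w' : List O) (hperm : w.Perm w') {a b : O}
    (hab : a ∉ w ∨ b ∉ w) (i j : ℕ)
    (hpre : Precedes (t ++ w) a i b j) : Precedes (t ++ w') a i b j := by
  obtain ⟨p, q, hp, hq, hpq⟩ := hpre
  rw [occIdx_eq, positions_append] at hp
  rw [occIdx_eq, positions_append] at hq
  rcases hab with ha | hb
  · have ha' : a ∉ w' := fun hm => ha (hperm.symm.subset hm)
    rw [positions_eq_nil ha, List.map_nil, List.append_nil] at hp
    have hpt : p < t.length := mem_positions_lt (mem_of_getElem?_eq_some hp)
    rcases Nat.lt_or_ge j (positions t b).length with hj | hj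
    · rw [List.getElem?_append_left hj] at hq
      exact ⟨p, q, by rw [occIdx_eq, positions_append, positions_eq_nil ha', List.map_nil,
        List.append_nil]; exact hp,
        by rw [occIdx_eq, positions_append, List.getElem?_append_left hj]; exact hq, hpq⟩
    · rw [List.getElem?_append_right hj] at hq
      have hlt' : j - (positions t b).length < (positions w' b).length := by
        have := (List.getElem?_eq_some_iff.1 hq).1
        rwa [List.length_map, length_positions_eq hperm b] at this
      refine ⟨p, t.length + (positions w' b)[j - (positions t b).length]'hlt', ?_, ?_, ?_⟩
      · rw [occIdx_eq, positions_append, positions_eq_nil ha', List.map_nil, List.append_nil]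
        exact hp
      · rw [occIdx_eq, positions_append, List.getElem?_append_right hj, List.getElem?_map,
          List.getElem?_eq_some_iff.2 ⟨hlt', rfl⟩, Option.map_some]
      · exact lt_of_lt_of_le hpt (Nat.le_add_right _ _)
  · have hb' : b ∉ w' := fun hm => hb (hperm.symm.subset hm)
    rw [positions_eq_nil hb, List.map_nil, List.append_nil] at hq
    have hqt : q < t.length := mem_positions_lt (mem_of_getElem?_eq_some hq)
    rcases Nat.lt_or_ge i (positions t a).length with hi | hi
    · rw [List.getElem?_append_left hi] at hp
      exact ⟨p, q, by rw [occIdx_eq, positions_append, List.getElem?_append_left hi]; exact hp,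
        by rw [occIdx_eq, positions_append, positions_eq_nil hb', List.map_nil,
          List.append_nil]; exact hq, hpq⟩
    · exfalso
      rw [List.getElem?_append_right hi, List.getElem?_map] at hp
      obtain ⟨x, _, hx2⟩ := Option.map_eq_some_iff.1 hp
      omega

lemma scheduleEquiv_append {Q : Type u} {R : Type w} (σ : O → Q → R × Q)
    (t w w' : List O) (hperm : w.Perm w')
    (hc : ∀ a b : O, Conflict σ a b → a ∉ w ∨ b ∉ w) :
    ScheduleEquiv σ (t ++ w) (t ++ w') := by
  refine ⟨Multiset.coe_eq_coe.2 (hperm.append_left t), fun a b i j hconf => ?_⟩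
  have hc' : a ∉ w' ∨ b ∉ w' := by
    rcases hc a b hconf with h | h
    · exact Or.inl (fun hm => h (hperm.symm.subset hm))
    · exact Or.inr (fun hm => h (hperm.symm.subset hm))
  exact ⟨precedes_mono σ t w w' hperm (hc a b hconf) i j,
    precedes_mono σ t w' w hperm.symm hc' i j⟩

end TraceAux

/-- if any two operations occurring in the `u_i`'s are
non-conflicting, then `{[t·u_1], …, [t·u_k]}` is compatible; in fact
`[t·u_1·u_2·…·u_k]` is a common extension of all `[t·u_i]`. -/
theorem trace_compatible_of_pairwise_nonconflicting
    {Q : Type u} {O : Type v} {R : Type w} (σ : O → Q → R × Q)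
    (t : List O) (k : ℕ) (u : Fin k → List O)
    (h : ∀ a b : O, (∃ i : Fin k, a ∈ u i) → (∃ j : Fin k, b ∈ u j) →
      ¬ Conflict σ a b) :
    (∀ i : Fin k,
      TraceLe σ (Quotient.mk (scheduleSetoid σ) (t ++ u i))
        (Quotient.mk (scheduleSetoid σ) (t ++ (List.ofFn u).flatten))) ∧
    Compatible σ {x : Trace σ | ∃ i : Fin k,
      x = Quotient.mk (scheduleSetoid σ) (t ++ u i)} := by
  classical
  set L := List.ofFn u with hL
  have hc : ∀ a b : O, Conflict σ a b → a ∉ L.flatten ∨ b ∉ L.flatten := by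
    intro a b hconf
    by_contra hcon
    push_neg at hcon
    obtain ⟨ha, hb⟩ := hcon
    obtain ⟨la, hla, hala⟩ := List.mem_flatten.1 ha
    obtain ⟨lb, hlb, hblb⟩ := List.mem_flatten.1 hb
    obtain ⟨ia, hia⟩ := (List.mem_ofFn (f := u) (a := la)).1 hla
    obtain ⟨ib, hib⟩ := (List.mem_ofFn (f := u) (a := lb)).1 hlb
    exact h a b ⟨ia, hia ▸ hala⟩ ⟨ib, hib ▸ hblb⟩ hconf
  have H : ∀ i : Fin k,
      TraceLe σ (Quotient.mk (scheduleSetoid σ) (t ++ u i))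
        (Quotient.mk (scheduleSetoid σ) (t ++ L.flatten)) := by
    intro i
    have hi : (i : ℕ) < L.length := by rw [hL, List.length_ofFn]; exact i.isLt
    have hLi : L[(i : ℕ)]'hi = u i := by simp [hL, List.getElem_ofFn]
    have hperm1 : (u i :: L.eraseIdx (i : ℕ)).Perm L := by
      rw [List.eraseIdx_eq_take_drop_succ, ← hLi]
      calc (L[(i:ℕ)]'hi :: (List.take (i:ℕ) L ++ List.drop ((i:ℕ)+1) L)).Perm
            (List.take (i:ℕ) L ++ L[(i:ℕ)]'hi :: List.drop ((i:ℕ)+1) L) := List.perm_middle.symm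
        _ = L := by rw [List.getElem_cons_drop, List.take_append_drop]
    have hflat : ((u i :: L.eraseIdx (i : ℕ)).flatten).Perm L.flatten := hperm1.flatten
    rw [List.flatten_cons] at hflat
    refine ⟨t ++ u i, (L.eraseIdx (i : ℕ)).flatten, rfl, ?_⟩
    apply Quotient.sound
    show ScheduleEquiv σ _ _
    rw [List.append_assoc]
    exact TraceAux.scheduleEquiv_append σ t L.flatten (u i ++ (L.eraseIdx (i : ℕ)).flatten)
      hflat.symm hc
  refine ⟨H, Quotient.mk (scheduleSetoid σ) (t ++ L.flatten), fun x hx => ?_⟩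
  obtain ⟨i, hxi⟩ := hx
  exact hxi ▸ H i
end
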